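/- Let E be a real inner product space, U : E → ℝ twice continuously differentiable, U_mid ∈ ℝ, Ψ(x) := log(cosh(U(x) − U_mid)), α(x) := −tanh(U(x) − U_mid). Suppose L ≥ 0 bounds the operator norm of the second derivative of Ψ everywhere, |Ψ(x)| ≤ M for all x, and s₀, …, s_T is a trajectory with ‖s_{t+1} − s_t‖ ≤ D for every t < T, where T ≥ 1. Then the time-averaged gradient-alignment reward satisfies | (1/T) ∑_{t=0}^{T−1} α(s_t)⟪∇U(s_t), s_{t+1} − s_t⟫ | ≤ 2M/T + (L/2) D². -/

import Mathlib

/-!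
Since `Ψ' = tanh (U - U_mid) • U'`, the reward `α(s)⟪∇U(s), Δ⟫` is exactly `-dΨ(s) Δ`. Each summand
therefore differs from the decrement `Ψ(s_t) - Ψ(s_{t+1})` by a first-order Taylor remainder of `Ψ`,
which is at most `(L/2) ‖Δ‖²` because `dΨ` is `L`-Lipschitz, while the decrements telescope to
`Ψ(s₀) - Ψ(s_T)`, of absolute value at most `2M`.
-/

open Real

theorem norm_sub_sub_fderiv_le_of_lipschitz_fderiv
    {E F : Type*} [NormedAddCommGroup E] [NormedSpace ℝ E]
    [NormedAddCommGroup F] [NormedSpace ℝ F] {f : E → F} (hf : Differentiable ℝ f) {L : ℝ}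
    (hL : ∀ x y, ‖fderiv ℝ f x - fderiv ℝ f y‖ ≤ L * ‖x - y‖) (a b : E) :
    ‖f b - f a - fderiv ℝ f a (b - a)‖ ≤ L / 2 * ‖b - a‖ ^ 2 := by
  set v := b - a
  -- compare the remainder along the segment with the solution `L ‖v‖² θ² / 2` of `B' = L ‖v‖² θ`
  let g : ℝ → F := fun θ => f (a + θ • v) - f a - θ • fderiv ℝ f a v
  have hg : ∀ θ : ℝ, HasDerivAt g ((fderiv ℝ f (a + θ • v) - fderiv ℝ f a) v) θ := by
    intro θ
    have hline : HasDerivAt (fun θ : ℝ => a + θ • v) v θ := by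
      simpa using ((hasDerivAt_id θ).smul_const v).const_add a
    exact ((((hf _).hasFDerivAt.comp_hasDerivAt θ hline).sub_const (f a)).sub
      ((hasDerivAt_id θ).smul_const (fderiv ℝ f a v))).congr_deriv (by simp)
  have hB : ∀ θ : ℝ, HasDerivAt (fun θ : ℝ => L * ‖v‖ ^ 2 * θ ^ 2 / 2) (L * ‖v‖ ^ 2 * θ) θ :=
    fun θ => (((hasDerivAt_pow 2 θ).const_mul _).div_const 2).congr_deriv (by norm_num; ring)
  have key := image_norm_le_of_norm_deriv_right_le_deriv_boundary (a := 0) (b := 1) (f := g)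
    (fun θ _ => (hg θ).continuousAt.continuousWithinAt) (fun θ _ => (hg θ).hasDerivWithinAt)
    (by simp [g]) hB (fun θ hθ => ?_) (show (1 : ℝ) ∈ Set.Icc 0 1 by norm_num)
  · convert key using 1
    · simp [g, v]
    · ring
  calc ‖(fderiv ℝ f (a + θ • v) - fderiv ℝ f a) v‖
      ≤ ‖fderiv ℝ f (a + θ • v) - fderiv ℝ f a‖ * ‖v‖ := ContinuousLinearMap.le_opNorm _ _
    _ ≤ L * ‖a + θ • v - a‖ * ‖v‖ := by gcongr; exact hL _ _
    _ = L * ‖v‖ ^ 2 * θ := by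
      rw [add_sub_cancel_left, norm_smul, Real.norm_of_nonneg hθ.1]; ring

theorem norm_fderiv_sub_le_of_norm_fderiv_fderiv_le
    {E F : Type*} [NormedAddCommGroup E] [NormedSpace ℝ E]
    [NormedAddCommGroup F] [NormedSpace ℝ F] {f : E → F} (hf : ContDiff ℝ 2 f) {L : ℝ}
    (hL : ∀ x, ‖fderiv ℝ (fderiv ℝ f) x‖ ≤ L) (x y : E) :
    ‖fderiv ℝ f x - fderiv ℝ f y‖ ≤ L * ‖x - y‖ :=
  convex_univ.norm_image_sub_le_of_norm_fderiv_le
    (fun z _ => ((hf.fderiv_right (m := 1) le_rfl).differentiable one_ne_zero) z)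
    (fun z _ => hL z) trivial trivial

theorem hasDerivAt_log_cosh (r : ℝ) : HasDerivAt (fun r => log (cosh r)) (tanh r) r := by
  convert (hasDerivAt_cosh r).log (cosh_pos r).ne' using 1
  rw [tanh_eq_sinh_div_cosh]

theorem fderiv_log_cosh_sub {E : Type*} [NormedAddCommGroup E] [NormedSpace ℝ E] {U : E → ℝ}
    {x : E} (hU : DifferentiableAt ℝ U x) (c : ℝ) :
    fderiv ℝ (fun y => log (cosh (U y - c))) x = tanh (U x - c) • fderiv ℝ U x :=
  ((hasDerivAt_log_cosh _).comp_hasFDerivAt x (hU.hasFDerivAt.sub_const c)).fderiv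

theorem abs_average_le_of_abs_sub_telescoping_le {φ a : ℕ → ℝ} {M ε : ℝ} {T : ℕ} (hT : 0 < T)
    (hφ : ∀ t, |φ t| ≤ M) (ha : ∀ t < T, |a t - (φ t - φ (t + 1))| ≤ ε) :
    |(1 / (T : ℝ)) * ∑ t ∈ Finset.range T, a t| ≤ 2 * M / T + ε := by
  have hsum : |∑ t ∈ Finset.range T, a t| ≤ 2 * M + T * ε := by
    have htel : ∑ t ∈ Finset.range T, a t
        = (φ 0 - φ T) + ∑ t ∈ Finset.range T, (a t - (φ t - φ (t + 1))) := by
      rw [Finset.sum_sub_distrib, Finset.sum_range_sub']; ring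
    calc |∑ t ∈ Finset.range T, a t|
        ≤ |φ 0 - φ T| + ∑ t ∈ Finset.range T, |a t - (φ t - φ (t + 1))| := by
          rw [htel]; exact (abs_add_le _ _).trans (by gcongr; exact Finset.abs_sum_le_sum_abs _ _)
      _ ≤ (|φ 0| + |φ T|) + ∑ _t ∈ Finset.range T, ε := by
          gcongr with t ht
          · exact abs_sub _ _
          · exact ha t (Finset.mem_range.mp ht)
      _ ≤ 2 * M + T * ε := by
          rw [Finset.sum_const, Finset.card_range, nsmul_eq_mul]; linarith [hφ 0, hφ T]
  have hT' : (0 : ℝ) < T := by exact_mod_cast hT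
  rw [abs_mul, abs_of_pos (by positivity : (0 : ℝ) < 1 / T)]
  calc 1 / (T : ℝ) * |∑ t ∈ Finset.range T, a t| ≤ 1 / T * (2 * M + T * ε) := by gcongr
    _ = 2 * M / T + ε := by field_simp

theorem time_averaged_gradient_alignment_bound_general
    {E : Type*} [NormedAddCommGroup E] [InnerProductSpace ℝ E] [CompleteSpace E]
    (U : E → ℝ) (hU : ContDiff ℝ 2 U) (Umid : ℝ) (L M D : ℝ) :
    let Ψ : E → ℝ := fun x => Real.log (Real.cosh (U x - Umid))
    let α : E → ℝ := fun x => - Real.tanh (U x - Umid)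
    (∀ x : E, ‖fderiv ℝ (fderiv ℝ Ψ) x‖ ≤ L) →
    (∀ x : E, |Ψ x| ≤ M) →
    ∀ (T : ℕ) (s : ℕ → E), 1 ≤ T →
      (∀ t < T, ‖s (t + 1) - s t‖ ≤ D) →
      |(1 / (T : ℝ)) *
          ∑ t ∈ Finset.range T, α (s t) * (inner ℝ (gradient U (s t)) (s (t + 1) - s t) : ℝ)| ≤
        2 * M / T + L / 2 * D ^ 2 := by
  intro Ψ α hΨ'' hΨM T s hT hD
  have hΨ : ContDiff ℝ 2 Ψ :=
    (contDiff_cosh.comp (hU.sub contDiff_const)).log fun x => (cosh_pos _).ne'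
  have hL : 0 ≤ L := (norm_nonneg (fderiv ℝ (fderiv ℝ Ψ) 0)).trans (hΨ'' 0)
  refine abs_average_le_of_abs_sub_telescoping_le (φ := fun t => Ψ (s t)) hT (fun t => hΨM (s t))
    fun t ht => ?_
  have hreward : α (s t) * inner ℝ (gradient U (s t)) (s (t + 1) - s t)
      = -fderiv ℝ Ψ (s t) (s (t + 1) - s t) := by
    rw [inner_gradient_left, fderiv_log_cosh_sub ((hU.differentiable two_ne_zero) _)]
    simp [α]
  calc |α (s t) * inner ℝ (gradient U (s t)) (s (t + 1) - s t) - (Ψ (s t) - Ψ (s (t + 1)))|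
      = ‖Ψ (s (t + 1)) - Ψ (s t) - fderiv ℝ Ψ (s t) (s (t + 1) - s t)‖ := by
        rw [hreward, Real.norm_eq_abs]; congr 1; ring
    _ ≤ L / 2 * ‖s (t + 1) - s t‖ ^ 2 :=
        norm_sub_sub_fderiv_le_of_lipschitz_fderiv (hΨ.differentiable two_ne_zero)
          (norm_fderiv_sub_le_of_norm_fderiv_fderiv_le hΨ hΨ'') _ _
    _ ≤ L / 2 * D ^ 2 := by gcongr; exact hD t ht

/-- **Finite-horizon version of Claim 2 of Theorem 1.**
With `Ψ(x) := log cosh (U x - U_mid)` and `α(x) := - tanh (U x - U_mid)`, if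
`‖∇²Ψ‖ ≤ L` everywhere, `|Ψ| ≤ M` everywhere, and the trajectory `s₀, …, s_T`
(with `T ≥ 1`) has steps of size at most `D`, then the time-averaged
gradient-alignment reward satisfies
`|(1/T) ∑_{t<T} α(s_t) ⟪∇U(s_t), s_{t+1} - s_t⟫| ≤ 2M/T + (L/2) D²`. -/
theorem time_averaged_gradient_alignment_bound
    {E : Type*} [NormedAddCommGroup E] [InnerProductSpace ℝ E] [CompleteSpace E]
    (U : E → ℝ) (hU : ContDiff ℝ 2 U) (Umid : ℝ) (L M D : ℝ) (hL0 : 0 ≤ L) :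
    let Ψ : E → ℝ := fun x => Real.log (Real.cosh (U x - Umid))
    let α : E → ℝ := fun x => - Real.tanh (U x - Umid)
    (∀ x : E, ‖fderiv ℝ (fderiv ℝ Ψ) x‖ ≤ L) →
    (∀ x : E, |Ψ x| ≤ M) →
    ∀ (T : ℕ) (s : ℕ → E), 1 ≤ T →
      (∀ t < T, ‖s (t + 1) - s t‖ ≤ D) →
      |(1 / (T : ℝ)) *
          ∑ t ∈ Finset.range T, α (s t) * (inner ℝ (gradient U (s t)) (s (t + 1) - s t) : ℝ)| ≤
        2 * M / T + L / 2 * D ^ 2 :=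
  time_averaged_gradient_alignment_bound_general U hU Umid L M D
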